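/- arXiv:0805.0286 — 2 statements merged into one kernel-verified Lean document; each statement's English description precedes it below -/
import Mathlib

section
/- Let M be a free Z-module with basis the set of pairs (a, e) where a ∈ B^n is a non-crossing perfect matching on 2n points and e ∈ a is a distinguished ('undotted') arc of a. Let N ⊆ M be the submodule generated by all elements (a, e) - (b, f) where a, b differ by a single nesting move fixing e = f (Type II moves on the dotted arcs), together with all Type I elements (a,{i,j}) + (a,{k,l}) - (b,{i,l}) - (b,{j,k}) for a → b via arcs {i,j},{k,l} ↦ {i,l},{j,k}. Then in M/N, for any a ∈ B^n and any arc {i,j} ∈ a with i < j, the class of (a, {i,j}) equals the alternating sum [(·,{i,i+1})] - [(·,{i+1,i+2})] + ... + [(·,{j-1,j})] of classes of matchings whose undotted arc is outermost. -/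
def IsMatching (n : ℕ) (f : ℕ → ℕ) : Prop :=
  (∀ m, 1 ≤ m → m ≤ 2 * n → (1 ≤ f m ∧ f m ≤ 2 * n ∧ f (f m) = m ∧ f m ≠ m)) ∧
  (∀ m, (m < 1 ∨ 2 * n < m) → f m = m)

def NonCrossing (f : ℕ → ℕ) : Prop :=
  ¬ ∃ i j k l : ℕ, i < j ∧ j < k ∧ k < l ∧ f i = k ∧ f j = l

def MoveAt (a b : ℕ → ℕ) (i j k l : ℕ) : Prop :=
  i < j ∧ j < k ∧ k < l ∧
  a i = j ∧ a j = i ∧ a k = l ∧ a l = k ∧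
  b i = l ∧ b l = i ∧ b j = k ∧ b k = j ∧
  ∀ m, m ∉ ({i, j, k, l} : Set ℕ) → b m = a m

def Move (a b : ℕ → ℕ) : Prop := ∃ i j k l, MoveAt a b i j k l

/-- A non-crossing matching together with a distinguished (undotted) arc,
recorded by its two endpoints in increasing order. -/
def Idx (n : ℕ) : Type :=
  {q : (ℕ → ℕ) × ℕ × ℕ //
    IsMatching n q.1 ∧ NonCrossing q.1 ∧ q.2.1 < q.2.2 ∧ q.1 q.2.1 = q.2.2}

/-- The free `ℤ`-module on pairs (matching, distinguished arc). -/
abbrev M (n : ℕ) := Idx n →₀ ℤ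

/-- Generators of the submodule `N`: Type II elements `(a,e) - (b,e)` for a nesting
move `a → b` fixing the distinguished arc `e`, and Type I elements
`(a,{i,j}) + (a,{k,l}) - (b,{i,l}) - (b,{j,k})` for a move via `{i,j},{k,l} ↦ {i,l},{j,k}`. -/
def NGen (n : ℕ) : Set (M n) :=
  {x | (∃ p q : Idx n, Move p.1.1 q.1.1 ∧ p.1.2 = q.1.2 ∧
          x = Finsupp.single p 1 - Finsupp.single q 1) ∨
       (∃ p₁ p₂ p₃ p₄ : Idx n, ∃ i j k l : ℕ,
          MoveAt p₁.1.1 p₃.1.1 i j k l ∧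
          p₁.1.1 = p₂.1.1 ∧ p₃.1.1 = p₄.1.1 ∧
          p₁.1.2 = (i, j) ∧ p₂.1.2 = (k, l) ∧ p₃.1.2 = (i, l) ∧ p₄.1.2 = (j, k) ∧
          x = Finsupp.single p₁ 1 + Finsupp.single p₂ 1
              - Finsupp.single p₃ 1 - Finsupp.single p₄ 1)}

noncomputable def NSub (n : ℕ) : Submodule ℤ (M n) := Submodule.span ℤ (NGen n)

/-!
Peeling off the arc at `i + 1` inside `{i,j}` is the inverse of a nesting move, so a Type I
relation writes `[(b,{i,j})]` as `[{i,i+1}] + [{k,j}] - [{i+1,k}]` with `k = b (i+1)`; induction on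
`j - i`, together with the parity of arc lengths (`k - i` is even), yields the alternating sum.
For this the classes `[(·,{s,s+1})]` must not depend on the matching: Type II moves that unnest
arcs strictly decrease the total arc length while fixing `{s,s+1}`, and the matchings where no
such move applies form a single normal form.
-/

theorem Finset.sum_lt_sum_of_eqOn_sdiff {ι M : Type*} [AddCommMonoid M] [PartialOrder M]
    [IsOrderedCancelAddMonoid M] [DecidableEq ι] {s t : Finset ι} {f g : ι → M} (hst : s ⊆ t)
    (heq : ∀ x ∈ t \ s, f x = g x) (hlt : ∑ x ∈ s, f x < ∑ x ∈ s, g x) :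
    ∑ x ∈ t, f x < ∑ x ∈ t, g x := by
  rw [← Finset.sum_sdiff hst, ← Finset.sum_sdiff hst (f := g), Finset.sum_congr rfl heq]
  exact add_lt_add_right hlt _

section Matching
variable {n : ℕ} {b : ℕ → ℕ} {i j k l : ℕ}

theorem nonCrossing_iff {f : ℕ → ℕ} :
    NonCrossing f ↔ ∀ p q r t, p < q → q < r → r < t → f p = r → f q ≠ t := by
  simp only [NonCrossing, not_exists, not_and]

theorem IsMatching.apply_apply (hb : IsMatching n b) (m : ℕ) : b (b m) = m := by
  by_cases h : 1 ≤ m ∧ m ≤ 2 * n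
  · exact (hb.1 m h.1 h.2).2.2.1
  · rw [hb.2 m (by omega), hb.2 m (by omega)]

theorem IsMatching.le_of_apply_ne (hb : IsMatching n b) {m : ℕ} (h : b m ≠ m) :
    1 ≤ m ∧ m ≤ 2 * n ∧ b m ≤ 2 * n := by
  by_cases hm : 1 ≤ m ∧ m ≤ 2 * n
  · exact ⟨hm.1, hm.2, (hb.1 m hm.1 hm.2).2.1⟩
  · exact absurd (hb.2 m (by omega)) h

theorem NonCrossing.apply_mem_Ioo (hnc : NonCrossing b) (hb : IsMatching n b) {m : ℕ}
    (hij : i < j) (harc : b i = j) (him : i < m) (hmj : m < j) :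
    i < b m ∧ b m < j ∧ b m ≠ m := by
  have hr := hb.le_of_apply_ne (m := i) (by omega)
  have := hb.1 m (by omega) (by omega)
  have := hb.apply_apply i
  have := hb.apply_apply m
  rw [nonCrossing_iff] at hnc
  grind

/-- The inverse of the nesting move `{i,j},{k,l} ↦ {i,l},{j,k}`. -/
def unnest (b : ℕ → ℕ) (i j k l : ℕ) : ℕ → ℕ := fun m =>
  if m = i then j else if m = j then i else if m = k then l else if m = l then k else b m

theorem moveAt_unnest (hb : IsMatching n b)
    (hijkl : i < j ∧ j < k ∧ k < l) (hil : b i = l) (hjk : b j = k) :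
    MoveAt (unnest b i j k l) b i j k l := by
  have := hb.apply_apply i
  have := hb.apply_apply j
  refine ⟨hijkl.1, hijkl.2.1, hijkl.2.2, ?_⟩
  simp only [unnest, Set.mem_insert_iff, Set.mem_singleton_iff]
  grind

theorem isMatching_unnest (hb : IsMatching n b)
    (hijkl : i < j ∧ j < k ∧ k < l) (hil : b i = l) (hjk : b j = k) :
    IsMatching n (unnest b i j k l) := by
  have := hb.apply_apply i
  have := hb.apply_apply j
  have := hb.le_of_apply_ne (m := i) (by omega)
  constructor
  · intro m h1 h2
    have := hb.1 m h1 h2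
    have := hb.apply_apply m
    simp only [unnest]
    grind
  · intro m hm
    have := hb.2 m hm
    simp only [unnest]
    grind

/-- An arc of `b` leaving `(i,j)` must land in `(k,l)`; adjacency of `i,j` or of `k,l` rules
this out, so no crossing is created. -/
theorem nonCrossing_unnest (hb : IsMatching n b)
    (hijkl : i < j ∧ j < k ∧ k < l) (hil : b i = l) (hjk : b j = k) (hnc : NonCrossing b)
    (hadj : j = i + 1 ∨ l = k + 1) : NonCrossing (unnest b i j k l) := by
  have := hb.apply_apply i
  have := hb.apply_apply j
  rw [nonCrossing_iff] at hnc ⊢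
  intro x y z w hxy hyz hzw hxz hyw
  have := hb.apply_apply x
  have := hb.apply_apply y
  simp only [unnest] at hxz hyw
  grind

/-- Truncated subtraction counts each arc once, at its left endpoint. -/
def totalLength (n : ℕ) (b : ℕ → ℕ) : ℕ := ∑ m ∈ Finset.range (2 * n + 1), (b m - m)

theorem totalLength_unnest_lt (hb : IsMatching n b)
    (hijkl : i < j ∧ j < k ∧ k < l) (hil : b i = l) (hjk : b j = k) :
    totalLength n (unnest b i j k l) < totalLength n b := by
  have := hb.apply_apply i
  have := hb.apply_apply j
  have := hb.le_of_apply_ne (m := i) (by omega)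
  apply Finset.sum_lt_sum_of_eqOn_sdiff (s := {i, j, k, l})
  · intro m hm
    simp only [Finset.mem_insert, Finset.mem_singleton] at hm
    rw [Finset.mem_range]
    omega
  · intro m hm
    simp only [Finset.mem_sdiff, Finset.mem_insert, Finset.mem_singleton, not_or] at hm
    simp only [unnest]
    grind
  · simp (disch := simp only [Finset.mem_insert, Finset.mem_singleton]; omega) only
      [Finset.sum_insert, Finset.sum_singleton, unnest]
    grind

theorem unnest_spec (hb : IsMatching n b) (hnc : NonCrossing b)
    (hijkl : i < j ∧ j < k ∧ k < l) (hil : b i = l) (hjk : b j = k)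
    (hadj : j = i + 1 ∨ l = k + 1) :
    IsMatching n (unnest b i j k l) ∧ NonCrossing (unnest b i j k l) ∧
      MoveAt (unnest b i j k l) b i j k l :=
  ⟨isMatching_unnest hb hijkl hil hjk, nonCrossing_unnest hb hijkl hil hjk hnc hadj,
    moveAt_unnest hb hijkl hil hjk⟩

theorem odd_sub_of_arc (hb : IsMatching n b) (hnc : NonCrossing b) (hij : i < j)
    (harc : b i = j) : Odd (j - i) := by
  induction h : j - i using Nat.strong_induction_on generalizing b i j with
  | _ d ih =>
  by_cases hj : j = i + 1
  · subst hj; rw [← h]; simp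
  obtain ⟨hk1, hk2, hkne⟩ := hnc.apply_mem_Ioo hb hij harc (m := i + 1) (by omega) (by omega)
  obtain ⟨ha, hnca, -, -, -, -, -, hak, -⟩ :=
    unnest_spec hb hnc ⟨by omega, by omega, hk2⟩ harc rfl (Or.inl rfl)
  have h₁ := ih (b (i + 1) - (i + 1)) (by omega) hb hnc (by omega) rfl rfl
  have h₂ := ih (j - b (i + 1)) (by omega) ha hnca hk2 hak rfl
  rw [← h, show j - i = b (i + 1) - (i + 1) + (j - b (i + 1)) + 1 by omega]
  exact (h₁.add_odd h₂).add_one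

/-- The normal form of a matching containing `{s,s+1}` under the nesting moves fixing that arc:
every arc is `{u,u+1}`, except that an arc starting at `s-1` is `{s-1,s+2}`. -/
def IsNormalForm (s : ℕ) (f : ℕ → ℕ) : Prop :=
  ∀ u, u < f u → f u = if u + 1 = s then u + 3 else u + 1

theorem IsNormalForm.eq {s : ℕ} {f g : ℕ → ℕ} (hf : IsMatching n f) (hg : IsMatching n g)
    (hfs : IsNormalForm s f) (hgs : IsNormalForm s g) : f = g := by
  funext u
  induction u using Nat.strong_induction_on with
  | _ u ih =>
  by_cases hu : 1 ≤ u ∧ u ≤ 2 * n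
  · have := hf.1 u hu.1 hu.2
    have := hg.1 u hu.1 hu.2
    have := hfs u
    have := hgs u
    have := hf.apply_apply u
    have := hg.apply_apply u
    have := ih (f u)
    have := ih (g u)
    have := hf.apply_apply (g u)
    have := hg.apply_apply (f u)
    grind
  · rw [hf.2 u (by omega), hg.2 u (by omega)]

theorem exists_move_of_not_isNormalForm {s : ℕ} (hb : IsMatching n b) (hnc : NonCrossing b)
    (hs : b s = s + 1) (h : ¬ IsNormalForm s b) :
    ∃ a, IsMatching n a ∧ NonCrossing a ∧ Move a b ∧ a s = s + 1 ∧
      totalLength n a < totalLength n b := by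
  simp only [IsNormalForm, not_forall] at h
  obtain ⟨u, hu, hne⟩ := h
  have := hb.apply_apply u
  have := hb.apply_apply s
  by_cases hus : u + 1 = s
  · -- the arc at `u + 1` is `{s,s+1}`, so unnest the last inner arc instead
    rw [if_pos hus] at hne
    have hl : u + 4 ≤ b u := by grind
    obtain ⟨hk1, hk2, hkne⟩ := hnc.apply_mem_Ioo hb hu rfl (m := b u - 1) (by omega) (by omega)
    have := hb.apply_apply (b u - 1)
    have hijkl : u < b (b u - 1) ∧ b (b u - 1) < b u - 1 ∧ b u - 1 < b u := by omega
    obtain ⟨ha, hnca, hmove⟩ := unnest_spec hb hnc hijkl rfl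
      (by omega) (Or.inr (by omega))
    refine ⟨_, ha, hnca, ⟨_, _, _, _, hmove⟩, ?_, totalLength_unnest_lt hb hijkl rfl (by omega)⟩
    simp only [unnest]
    grind
  · rw [if_neg hus] at hne
    obtain ⟨hk1, hk2, hkne⟩ :=
      hnc.apply_mem_Ioo hb hu rfl (m := u + 1) (by omega) (by omega)
    have := hb.apply_apply (u + 1)
    have hijkl : u < u + 1 ∧ u + 1 < b (u + 1) ∧ b (u + 1) < b u := by omega
    obtain ⟨ha, hnca, hmove⟩ := unnest_spec hb hnc hijkl rfl rfl (Or.inl rfl)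
    refine ⟨_, ha, hnca, ⟨_, _, _, _, hmove⟩, ?_, totalLength_unnest_lt hb hijkl rfl rfl⟩
    simp only [unnest]
    grind

end Matching

section AltSum
variable {G : Type*} [AddCommGroup G] (v : ℕ → G)

def altSum (i j : ℕ) : G := ∑ s ∈ Finset.Ico i j, (-1 : ℤ) ^ (s - i) • v s

theorem altSum_self_succ (i : ℕ) : altSum v i (i + 1) = v i := by
  simp [altSum]

theorem altSum_eq_sub_add {i k j : ℕ} (hik : i < k) (hkj : k ≤ j) (hev : Even (k - i)) :
    altSum v i j = altSum v i (i + 1) - altSum v (i + 1) k + altSum v k j := by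
  have hmid : altSum v (i + 1) k = -∑ s ∈ Finset.Ico (i + 1) k, (-1 : ℤ) ^ (s - i) • v s := by
    rw [altSum, ← Finset.sum_neg_distrib]
    refine Finset.sum_congr rfl fun s hs => ?_
    rw [Finset.mem_Ico] at hs
    rw [show s - i = s - (i + 1) + 1 by omega, pow_succ, mul_neg_one, neg_smul, neg_neg]
  have hright : altSum v k j = ∑ s ∈ Finset.Ico k j, (-1 : ℤ) ^ (s - i) • v s := by
    refine Finset.sum_congr rfl fun s hs => ?_
    rw [Finset.mem_Ico] at hs
    rw [show s - i = s - k + (k - i) by omega, pow_add, hev.neg_one_pow, mul_one]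
  set w : ℕ → G := fun s => (-1 : ℤ) ^ (s - i) • v s
  rw [hmid, hright, sub_neg_eq_add, altSum, altSum,
    Finset.sum_Ico_consecutive w (Nat.le_succ i) (Nat.succ_le_of_lt hik),
    Finset.sum_Ico_consecutive w hik.le hkj]

end AltSum

namespace Idx
variable {n : ℕ}

noncomputable def cls (p : Idx n) : M n ⧸ NSub n := Submodule.Quotient.mk (Finsupp.single p 1)

theorem cls_eq_of_move {p q : Idx n} (hm : Move p.1.1 q.1.1) (he : p.1.2 = q.1.2) :
    p.cls = q.cls :=
  (Submodule.Quotient.eq _).2 (Submodule.subset_span (Or.inl ⟨p, q, hm, he, rfl⟩))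

theorem cls_add_cls_of_moveAt {p₁ p₂ p₃ p₄ : Idx n} {i j k l : ℕ}
    (hm : MoveAt p₁.1.1 p₃.1.1 i j k l) (h₁₂ : p₁.1.1 = p₂.1.1) (h₃₄ : p₃.1.1 = p₄.1.1)
    (h₁ : p₁.1.2 = (i, j)) (h₂ : p₂.1.2 = (k, l)) (h₃ : p₃.1.2 = (i, l)) (h₄ : p₄.1.2 = (j, k)) :
    p₁.cls + p₂.cls = p₃.cls + p₄.cls := by
  have hgen : Finsupp.single p₁ (1 : ℤ) + Finsupp.single p₂ 1 - Finsupp.single p₃ 1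
      - Finsupp.single p₄ 1 ∈ NSub n :=
    Submodule.subset_span (Or.inr ⟨p₁, p₂, p₃, p₄, i, j, k, l, hm, h₁₂, h₃₄, h₁, h₂, h₃, h₄, rfl⟩)
  simp only [cls, ← Submodule.Quotient.mk_add, Submodule.Quotient.eq]
  convert hgen using 1
  abel

theorem exists_isNormalForm_cls_eq {s : ℕ} (p : Idx n) (hp : p.1.2 = (s, s + 1)) :
    ∃ t : Idx n, t.1.2 = (s, s + 1) ∧ IsNormalForm s t.1.1 ∧ p.cls = t.cls := by
  induction h : totalLength n p.1.1 using Nat.strong_induction_on generalizing p with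
  | _ d ih =>
  by_cases hnf : IsNormalForm s p.1.1
  · exact ⟨p, hp, hnf, rfl⟩
  have hs : p.1.1 s = s + 1 := by simpa [hp] using p.2.2.2.2
  obtain ⟨a, ha, hnca, hmove, has, hlt⟩ :=
    exists_move_of_not_isNormalForm p.2.1 p.2.2.1 hs hnf
  obtain ⟨t, ht, htnf, hcls⟩ :=
    ih _ (h ▸ hlt) ⟨(a, s, s + 1), ha, hnca, s.lt_succ_self, has⟩ rfl rfl
  exact ⟨t, ht, htnf, (cls_eq_of_move hmove hp.symm).symm.trans hcls⟩

theorem cls_eq_of_snd_eq {s : ℕ} {p q : Idx n} (hp : p.1.2 = (s, s + 1))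
    (hq : q.1.2 = (s, s + 1)) : p.cls = q.cls := by
  obtain ⟨t₁, ht₁, hnf₁, hp₁⟩ := p.exists_isNormalForm_cls_eq hp
  obtain ⟨t₂, ht₂, hnf₂, hq₂⟩ := q.exists_isNormalForm_cls_eq hq
  have ht : t₁ = t₂ :=
    Subtype.ext (Prod.ext (hnf₁.eq t₁.2.1 t₂.2.1 hnf₂) (ht₁.trans ht₂.symm))
  rw [hp₁, hq₂, ht]

theorem cls_eq_altSum (c : ℕ → Idx n) {b : ℕ → ℕ} (hb : IsMatching n b) (hnc : NonCrossing b)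
    {i j : ℕ} (hij : i < j) (harc : b i = j)
    (hc : ∀ s, i ≤ s → s < j → (c s).1.2 = (s, s + 1)) :
    cls (⟨(b, i, j), hb, hnc, hij, harc⟩ : Idx n) = altSum (fun s => (c s).cls) i j := by
  induction h : j - i using Nat.strong_induction_on generalizing b i j with
  | _ d ih =>
  by_cases hj : j = i + 1
  · subst hj
    rw [altSum_self_succ]
    exact cls_eq_of_snd_eq (p := ⟨(b, i, i + 1), hb, hnc, hij, harc⟩) rfl
      (hc i le_rfl i.lt_succ_self)
  obtain ⟨hk1, hk2, hkne⟩ := hnc.apply_mem_Ioo hb hij harc (m := i + 1) (by omega) (by omega)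
  have hijkl : i < i + 1 ∧ i + 1 < b (i + 1) ∧ b (i + 1) < j := by omega
  obtain ⟨ha, hnca, hmove⟩ := unnest_spec hb hnc hijkl harc rfl (Or.inl rfl)
  obtain ⟨-, -, -, hai, -, hak, -⟩ := id hmove
  have hev : Even (b (i + 1) - i) := by
    rw [show b (i + 1) - i = b (i + 1) - (i + 1) + 1 by omega]
    exact (odd_sub_of_arc hb hnc hijkl.2.1 rfl).add_one
  rw [altSum_eq_sub_add _ (by omega : i < b (i + 1)) hk2.le hev,
    ← ih 1 (by omega) ha hnca hijkl.1 hai (fun s h1 _ => hc s h1 (by omega)) (by omega),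
    ← ih _ (by omega) hb hnc hijkl.2.1 rfl (fun s h1 h2 => hc s (by omega) (by omega)) rfl,
    ← ih _ (by omega) ha hnca hijkl.2.2 hak (fun s h1 h2 => hc s (by omega) h2) rfl,
    sub_add_eq_add_sub, eq_sub_iff_add_eq]
  refine (cls_add_cls_of_moveAt hmove ?_ ?_ ?_ ?_ ?_ ?_).symm <;> rfl

end Idx

/-- In `M/N`, the class of `(a,{i,j})` equals the alternating sum of classes of
elements whose undotted arc is the outermost arc `{s,s+1}`, for `s = i,...,j-1`
(the class of `(·,{s,s+1})` being independent of the ambient matching). -/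
theorem stmt9 (n : ℕ) (a : ℕ → ℕ) (ha : IsMatching n a) (hnc : NonCrossing a)
    (i j : ℕ) (hij : i < j) (harc : a i = j)
    (c : ℕ → Idx n) (hc : ∀ s, i ≤ s → s < j → (c s).1.2 = (s, s + 1)) :
    Submodule.Quotient.mk (p := NSub n)
        (Finsupp.single (⟨(a, i, j), ha, hnc, hij, harc⟩ : Idx n) (1 : ℤ)) =
      ∑ s ∈ Finset.Ico i j, ((-1 : ℤ) ^ (s - i)) •
        Submodule.Quotient.mk (p := NSub n) (Finsupp.single (c s) (1 : ℤ)) :=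
  Idx.cls_eq_altSum c ha hnc hij harc hc
end

section
/- In the polynomial quotient ring S = Z[x_1, ..., x_{2n}] / (x_1^2, ..., x_{2n}^2, e_1, ..., e_{2n}), where e_k is the k-th elementary symmetric polynomial in x_1,...,x_{2n}, the product of any element of the augmentation ideal (the ideal generated by x_1,...,x_{2n}) with any homogeneous element of top degree n is zero. -/
/-!
Write `x i` for the image of `X i` in `S`. Since every `e_k` vanishes in `S`, Vieta gives
`∏ i, (T + x i) = T ^ (2n)` in `S[T]`, and since `x i ^ 2 = 0` we have
`(T + x i) * (T - x i) = T ^ 2`. Multiplying Vieta's identity by `∏ i ∉ A, (T - x i)` gives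
`(∏ i ∈ A, (T + x i)) * T ^ (2 |Aᶜ|) = T ^ (2n) * ∏ i ∉ A, (T - x i)`, and comparing
coefficients of `T ^ (2 |Aᶜ|)` shows `∏ i ∈ A, x i = 0` as soon as `|A| > n`. Hence every
monomial of degree `> n` vanishes in `S`, and `q * p` is a combination of such monomials.
-/

open MvPolynomial

/-- The defining ideal of `S = ℤ[x_1,...,x_{2n}]/(x_i², e_1,...,e_{2n})`, where
`e_k` is the `k`-th elementary symmetric polynomial. -/
noncomputable def springerIdeal (n : ℕ) : Ideal (MvPolynomial (Fin (2 * n)) ℤ) :=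
  Ideal.span
    ((Set.range fun i : Fin (2 * n) => (X i : MvPolynomial (Fin (2 * n)) ℤ) ^ 2) ∪
     ((fun k => esymm (Fin (2 * n)) ℤ k) '' Set.Icc 1 (2 * n)))

open Finset

section SquareZero

variable {R ι : Type*} [CommRing R] [Fintype ι] {x : ι → R}

theorem prod_X_add_C_eq_X_pow_of_esymm_eq_zero
    (hx : ∀ k, 1 ≤ k → k ≤ Fintype.card ι → (univ.val.map x).esymm k = 0) :
    ∏ i, (Polynomial.X + Polynomial.C (x i)) = Polynomial.X ^ Fintype.card ι := by
  have hvieta := Multiset.prod_X_add_C_eq_sum_esymm (univ.val.map x)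
  rw [Multiset.map_map, Function.comp_def, Multiset.card_map, card_val, card_univ] at hvieta
  rw [prod_eq_multiset_prod, hvieta, sum_eq_single 0]
  · simp [Multiset.esymm, Multiset.powersetCard_zero_left]
  · intro k hk hk0
    rw [hx k (Nat.one_le_iff_ne_zero.2 hk0) (Nat.lt_succ_iff.1 (mem_range.1 hk)),
      Polynomial.C_0, zero_mul]
  · simp

variable [DecidableEq ι]

theorem prod_eq_zero_of_card_lt_two_mul_card (hsq : ∀ i, x i ^ 2 = 0)
    (hx : ∀ k, 1 ≤ k → k ≤ Fintype.card ι → (univ.val.map x).esymm k = 0)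
    {A : Finset ι} (hA : Fintype.card ι < 2 * #A) : ∏ i ∈ A, x i = 0 := by
  have hconj : ∀ i, (Polynomial.X + Polynomial.C (x i)) * (Polynomial.X - Polynomial.C (x i)) =
      Polynomial.X ^ 2 := fun i => by
    rw [← sq_sub_sq, ← Polynomial.C_pow, hsq, Polynomial.C_0, sub_zero]
  have key : (∏ i ∈ A, (Polynomial.X + Polynomial.C (x i))) * Polynomial.X ^ (2 * #Aᶜ) =
      Polynomial.X ^ Fintype.card ι * ∏ i ∈ Aᶜ, (Polynomial.X - Polynomial.C (x i)) := by
    calc _ = (∏ i ∈ A, (Polynomial.X + Polynomial.C (x i))) * ∏ i ∈ Aᶜ,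
          ((Polynomial.X + Polynomial.C (x i)) * (Polynomial.X - Polynomial.C (x i))) := by
          simp only [hconj, prod_const, ← pow_mul, mul_comm]
      _ = _ := by
          rw [prod_mul_distrib, ← mul_assoc, prod_mul_prod_compl,
            prod_X_add_C_eq_X_pow_of_esymm_eq_zero hx]
  have hcard := card_add_card_compl A
  have hcoeff := congrArg (Polynomial.coeff · (2 * #Aᶜ)) key
  simpa [Polynomial.coeff_mul_X_pow', Polynomial.coeff_X_pow_mul', Polynomial.coeff_zero_prod,
    show ¬ Fintype.card ι ≤ 2 * #Aᶜ by omega] using hcoeff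

theorem finsuppProd_pow_eq_zero_of_card_lt_two_mul_degree (hsq : ∀ i, x i ^ 2 = 0)
    (hx : ∀ k, 1 ≤ k → k ≤ Fintype.card ι → (univ.val.map x).esymm k = 0)
    {m : ι →₀ ℕ} (hm : Fintype.card ι < 2 * m.degree) :
    m.prod (fun i k => x i ^ k) = 0 := by
  by_cases hsquare : ∃ i, 2 ≤ m i
  · obtain ⟨i, hi⟩ := hsquare
    exact prod_eq_zero (Finsupp.mem_support_iff.2 (by omega)) (pow_eq_zero_of_le hi (hsq i))
  · push Not at hsquare
    have hone : ∀ i ∈ m.support, m i = 1 := fun i hi => by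
      have := Finsupp.mem_support_iff.1 hi
      have := hsquare i
      omega
    have hdeg : m.degree = #m.support := by
      rw [Finsupp.degree_apply, sum_congr rfl hone, sum_const, smul_eq_mul, mul_one]
    rw [Finsupp.prod, prod_congr rfl fun i hi => by rw [hone i hi, pow_one]]
    exact prod_eq_zero_of_card_lt_two_mul_card hsq hx (hdeg ▸ hm)

end SquareZero

section Springer

variable {n : ℕ}

theorem mk_X_sq_eq_zero (i : Fin (2 * n)) :
    Ideal.Quotient.mk (springerIdeal n) (X i) ^ 2 = 0 := by
  rw [← map_pow, Ideal.Quotient.eq_zero_iff_mem]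
  exact Ideal.subset_span (Or.inl ⟨i, rfl⟩)

theorem esymm_mk_X_eq_zero {k : ℕ} (hk₁ : 1 ≤ k) (hk : k ≤ 2 * n) :
    (univ.val.map fun i => Ideal.Quotient.mk (springerIdeal n) (X i)).esymm k = 0 := by
  simp_rw [Finset.esymm_map_val, ← map_prod, ← map_sum, Ideal.Quotient.eq_zero_iff_mem]
  exact Ideal.subset_span (Or.inr ⟨k, ⟨hk₁, hk⟩, rfl⟩)

theorem monomial_mem_springerIdeal {m : Fin (2 * n) →₀ ℕ} (hm : n < m.degree) :
    monomial m 1 ∈ springerIdeal n := by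
  rw [← Ideal.Quotient.eq_zero_iff_mem, monomial_eq, C_1, one_mul, map_finsuppProd]
  simp_rw [map_pow]
  refine finsuppProd_pow_eq_zero_of_card_lt_two_mul_degree mk_X_sq_eq_zero
    (fun k hk₁ hk => esymm_mk_X_eq_zero hk₁ (by simpa using hk)) (by simp; omega)

end Springer

/-- In `S`, the product of any element of the augmentation ideal (generated by the
`x_i`) with any homogeneous element of top degree `n` is zero. -/
theorem stmt14 (n : ℕ) (p q : MvPolynomial (Fin (2 * n)) ℤ)
    (hp : p.IsHomogeneous n)
    (hq : q ∈ Ideal.span (Set.range (X : Fin (2 * n) → MvPolynomial (Fin (2 * n)) ℤ))) :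
    Ideal.Quotient.mk (springerIdeal n) (q * p) = 0 := by
  suffices q * p ∈ Ideal.span ((monomial · 1) '' {m | n < m.degree}) by
    rw [Ideal.Quotient.eq_zero_iff_mem]
    exact Ideal.span_le.2 (by rintro _ ⟨m, hm, rfl⟩; exact monomial_mem_springerIdeal hm) this
  rw [← Set.image_univ, mem_ideal_span_X_image] at hq
  refine mem_ideal_span_monomial_image.2 fun m hm => ⟨m, ?_, le_rfl⟩
  obtain ⟨a, ha, b, hb, rfl⟩ := mem_add.1 (support_mul q p hm)
  obtain ⟨i, -, hai⟩ := hq a ha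
  have hb : b.degree = n := by
    by_contra h
    exact mem_support_iff.1 hb (hp.coeff_eq_zero h)
  have ha : 0 < a.degree := (Nat.pos_of_ne_zero hai).trans_le (Finsupp.le_degree i a)
  change n < (a + b).degree
  rw [map_add]
  omega
end
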